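/- Let X be a cubical object with connections in an abelian category A. Let F(X) be the chain subcomplex of N(X) with F(X)_0 = 0, F(X)_1 = 0, and F(X)_n = Γ_1(N(X)_{n−1}) + … + Γ_{n−1}(N(X)_{n−1}) for n ≥ 2 (the sum of the images under the connections Γ_i of the subobject N(X)_{n−1} ⊆ X_{n−1}). Then N(X) decomposes as the direct sum N(X) = M(X) ⊕ F(X) of chain subcomplexes; in particular M(X) is isomorphic to N(X)/F(X). -/
import Mathlib


open CategoryTheory CategoryTheory.Limits

universe v u

structure Precub (C : Type u) [Category.{v} C] where
  X : ℕ → C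
  d : ∀ n : ℕ, ℕ → Bool → (X (n + 1) ⟶ X n)
  dd : ∀ (n i j : ℕ) (α ε : Bool), 1 ≤ i → i < j → j ≤ n + 2 →
    d (n + 1) j ε ≫ d n i α = d (n + 1) i α ≫ d n (j - 1) ε

/-- The subobject `N_n(X) ⊆ X_n`: intersection of the kernels of the faces `∂_i^1`. -/
noncomputable def NSub {C : Type u} [Category.{v} C] [Abelian C] (X : Precub C) :
    ∀ n, Subobject (X.X n)
  | 0 => ⊤
  | (n + 1) => (Finset.Icc 1 (n + 1)).inf fun i => kernelSubobject (X.d n i true)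

/-- The subobject `M_n(X) ⊆ X_n`. -/
noncomputable def MSub {C : Type u} [Category.{v} C] [Abelian C] (X : Precub C) :
    ∀ n, Subobject (X.X n)
  | 0 => ⊤
  | (n + 1) => ((Finset.Icc 1 (n + 1)).inf fun i => kernelSubobject (X.d n i true)) ⊓
      ((Finset.Icc 1 n).inf fun i => kernelSubobject (X.d n i false))

structure Pseudocub (C : Type u) [Category.{v} C] extends Precub C where
  s : ∀ n : ℕ, ℕ → (X n ⟶ X (n + 1))
  ds_lt : ∀ (n i j : ℕ) (α : Bool), 1 ≤ i → i < j → j ≤ n + 2 →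
    s (n + 1) j ≫ d (n + 1) i α = d n i α ≫ s n (j - 1)
  ds_eq : ∀ (n i : ℕ) (α : Bool), 1 ≤ i → i ≤ n + 1 → s n i ≫ d n i α = 𝟙 (X n)
  ds_gt : ∀ (n i j : ℕ) (α : Bool), 1 ≤ j → j < i → i ≤ n + 2 →
    s (n + 1) j ≫ d (n + 1) i α = d n (i - 1) α ≫ s n j

/-- A cubical object with connections. -/
structure CubConn (C : Type u) [Category.{v} C] extends Pseudocub C where
  ss : ∀ (n i j : ℕ), 1 ≤ i → i ≤ j → j ≤ n + 1 →
    s n j ≫ s (n + 1) i = s n i ≫ s (n + 1) (j + 1)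
  conn : ∀ n : ℕ, ℕ → (X (n + 1) ⟶ X (n + 2))
  cc : ∀ (n i j : ℕ), 1 ≤ i → i ≤ j → j ≤ n + 1 →
    conn n j ≫ conn (n + 1) i = conn n i ≫ conn (n + 1) (j + 1)
  cs_lt : ∀ (n i j : ℕ), 1 ≤ i → i < j → j ≤ n + 2 →
    s (n + 1) j ≫ conn (n + 1) i = conn n i ≫ s (n + 2) (j + 1)
  cs_eq : ∀ (n i : ℕ), 1 ≤ i → i ≤ n + 2 →
    s (n + 1) i ≫ conn (n + 1) i = s (n + 1) i ≫ s (n + 2) i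
  cs_gt : ∀ (n i j : ℕ), 1 ≤ j → j < i → i ≤ n + 2 →
    s (n + 1) j ≫ conn (n + 1) i = conn n (i - 1) ≫ s (n + 2) j
  dconn_lt : ∀ (n i j : ℕ) (α : Bool), 1 ≤ i → i < j → j ≤ n + 2 →
    conn (n + 1) j ≫ d (n + 2) i α = d (n + 1) i α ≫ conn n (j - 1)
  dconn_eq_zero : ∀ (n j : ℕ), 1 ≤ j → j ≤ n + 1 →
    conn n j ≫ d (n + 1) j false = 𝟙 (X (n + 1)) ∧
    conn n j ≫ d (n + 1) (j + 1) false = 𝟙 (X (n + 1))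
  dconn_eq_one : ∀ (n j : ℕ), 1 ≤ j → j ≤ n + 1 →
    conn n j ≫ d (n + 1) j true = d n j true ≫ s n j ∧
    conn n j ≫ d (n + 1) (j + 1) true = d n j true ≫ s n j
  dconn_gt : ∀ (n i j : ℕ) (α : Bool), 1 ≤ j → j + 1 < i → i ≤ n + 3 →
    conn (n + 1) j ≫ d (n + 2) i α = d (n + 1) (i - 1) α ≫ conn n j

/-- The subobject `F_n(X) ⊆ X_n`: `F_0 = F_1 = 0` and
`F_n = Γ_1(N_{n-1}(X)) + ⋯ + Γ_{n-1}(N_{n-1}(X))` for `n ≥ 2`. -/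
noncomputable def FSub {C : Type u} [Category.{v} C] [Abelian C] (X : CubConn C) :
    ∀ n, Subobject (X.X n)
  | 0 => ⊥
  | 1 => ⊥
  | (n + 2) => (Finset.Icc 1 (n + 1)).sup fun j =>
      imageSubobject ((NSub X.toPrecub (n + 1)).arrow ≫ X.conn n j)

section Aux

set_option linter.unusedSectionVars false

variable {C : Type u} [Category.{v} C] [Abelian C]

lemma arrow_comp_zero_of_le_ker {Y Z : C} {A : Subobject Y} {g : Y ⟶ Z}
    (h : A ≤ kernelSubobject g) : A.arrow ≫ g = 0 := by
  rw [← Subobject.ofLE_arrow h, Category.assoc, kernelSubobject_arrow_comp, comp_zero]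

lemma factors_iff_coker {Y Z : C} (P : Subobject Y) (f : Z ⟶ Y) :
    P.Factors f ↔ f ≫ cokernel.π P.arrow = 0 := by
  constructor
  · intro h
    rw [← Subobject.factorThru_arrow P f h, Category.assoc, cokernel.condition, comp_zero]
  · intro h
    rw [← Abelian.monoLift_comp P.arrow f h]
    exact Subobject.factors_comp_arrow _

lemma factors_image {A B Z : C} (g : A ⟶ B) (u : Z ⟶ A) :
    (imageSubobject g).Factors (u ≫ g) := by
  have : u ≫ g = (u ≫ factorThruImageSubobject g) ≫ (imageSubobject g).arrow := by
    rw [Category.assoc, imageSubobject_arrow_comp]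
  rw [this]
  exact Subobject.factors_comp_arrow _

lemma imageSubobject_le_of_factors {A B : C} (f : A ⟶ B) (P : Subobject B) (h : P.Factors f) :
    imageSubobject f ≤ P :=
  imageSubobject_le f (P.factorThru f h) (Subobject.factorThru_arrow _ _ _)

lemma factors_comp_trans {A Y Z : C} {P : Subobject Y} {Q : Subobject Z} (f : A ⟶ Y) (g : Y ⟶ Z)
    (hf : P.Factors f) (hg : Q.Factors (P.arrow ≫ g)) : Q.Factors (f ≫ g) := by
  rw [← Subobject.factorThru_arrow P f hf, Category.assoc]
  exact Subobject.factors_of_factors_right _ hg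

lemma factors_neg {A Y : C} {P : Subobject Y} (f : A ⟶ Y) (h : P.Factors f) : P.Factors (-f) := by
  have := Subobject.factors_comp_arrow (-(P.factorThru f h))
  rwa [Preadditive.neg_comp, Subobject.factorThru_arrow] at this

lemma factors_zsmul {A Y : C} {P : Subobject Y} (f : A ⟶ Y) (c : ℤ) (h : P.Factors f) :
    P.Factors (c • f) := by
  have := Subobject.factors_comp_arrow (c • (P.factorThru f h))
  rwa [Preadditive.zsmul_comp, Subobject.factorThru_arrow] at this

lemma factors_sub {A Y : C} {P : Subobject Y} (f g : A ⟶ Y) (hf : P.Factors f) (hg : P.Factors g) :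
    P.Factors (f - g) := by
  rw [sub_eq_add_neg]
  exact Subobject.factors_add _ _ hf (factors_neg _ hg)

lemma factors_finset_sum {A Y : C} {P : Subobject Y} {I : Type*} (s : Finset I) (f : I → (A ⟶ Y))
    (h : ∀ i ∈ s, P.Factors (f i)) : P.Factors (∑ i ∈ s, f i) :=
  Finset.sum_induction f (fun g => P.Factors g) (fun _ _ ha hb => Subobject.factors_add _ _ ha hb)
    Subobject.factors_zero h

lemma le_of_factors_arrow {Y : C} {A B : Subobject Y} (h : B.Factors A.arrow) : A ≤ B :=
  Subobject.le_of_comm (B.factorThru A.arrow h) (Subobject.factorThru_arrow _ _ _)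

end Aux

section Cub

set_option linter.unusedSectionVars false
set_option maxHeartbeats 1000000

variable {C : Type u} [Category.{v} C] [Abelian C] (X : CubConn C)

lemma N_d_true (n k : ℕ) (hk1 : 1 ≤ k) (hk2 : k ≤ n + 1) :
    (NSub X.toPrecub (n + 1)).arrow ≫ X.d n k true = 0 :=
  arrow_comp_zero_of_le_ker
    (Finset.inf_le (f := fun i => kernelSubobject (X.d n i true)) (by simp; omega))

lemma N_face (n i : ℕ) (hi1 : 1 ≤ i) (hi2 : i ≤ n + 1) :
    (NSub X.toPrecub n).Factors ((NSub X.toPrecub (n + 1)).arrow ≫ X.d n i false) := by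
  cases n with
  | zero => exact Subobject.top_factors _
  | succ m =>
    rw [show NSub X.toPrecub (m + 1) =
      (Finset.Icc 1 (m + 1)).inf fun i => kernelSubobject (X.toPrecub.d m i true) from rfl,
      Subobject.finset_inf_factors]
    intro k hk
    simp only [Finset.mem_Icc] at hk
    apply kernelSubobject_factors
    rw [Category.assoc]
    rcases lt_or_ge k i with hlt | hle
    · rw [X.toPrecub.dd m k i true false hk.1 hlt hi2, ← Category.assoc,
        N_d_true X (m + 1) k hk.1 (by omega), zero_comp]
    · have h := X.toPrecub.dd m i (k + 1) false true hi1 (by omega) (by omega)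
      simp only [Nat.add_sub_cancel] at h
      rw [← h, ← Category.assoc, N_d_true X (m + 1) (k + 1) (by omega) (by omega), zero_comp]

lemma N_conn (n j : ℕ) (hj1 : 1 ≤ j) (hj2 : j ≤ n + 1) :
    (NSub X.toPrecub (n + 2)).Factors ((NSub X.toPrecub (n + 1)).arrow ≫ X.conn n j) := by
  rw [show NSub X.toPrecub (n + 2) =
    (Finset.Icc 1 (n + 2)).inf fun i => kernelSubobject (X.toPrecub.d (n + 1) i true) from rfl,
    Subobject.finset_inf_factors]
  intro k hk
  simp only [Finset.mem_Icc] at hk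
  apply kernelSubobject_factors
  rw [Category.assoc]
  rcases lt_or_ge k j with hlt | hle
  · -- k < j, so j ≥ 2, n ≥ 1
    obtain ⟨m, rfl⟩ : ∃ m, n = m + 1 := ⟨n - 1, by omega⟩
    rw [X.dconn_lt m k j true hk.1 hlt hj2, ← Category.assoc,
      N_d_true X (m + 1) k hk.1 (by omega), zero_comp]
  · rcases Nat.lt_or_ge k (j + 2) with hk2 | hk2
    · -- k = j or k = j+1
      rcases Nat.eq_or_lt_of_le hle with rfl | hlt2
      · rw [(X.dconn_eq_one n j hj1 hj2).1, ← Category.assoc,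
          N_d_true X n j hj1 hj2, zero_comp]
      · have : k = j + 1 := by omega
        subst this
        rw [(X.dconn_eq_one n j hj1 hj2).2, ← Category.assoc,
          N_d_true X n j hj1 hj2, zero_comp]
    · -- k > j + 1, so n ≥ 1
      obtain ⟨m, rfl⟩ : ∃ m, n = m + 1 := ⟨n - 1, by omega⟩
      rw [X.dconn_gt m k j true hj1 hk2 (by omega), ← Category.assoc,
        N_d_true X (m + 1) (k - 1) (by omega) (by omega), zero_comp]

lemma F_le_N : ∀ n, FSub X n ≤ NSub X.toPrecub n := by
  intro n
  match n with
  | 0 => exact bot_le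
  | 1 => exact bot_le
  | (n + 2) =>
    apply Finset.sup_le
    intro j hj
    simp only [Finset.mem_Icc] at hj
    exact imageSubobject_le_of_factors _ _ (N_conn X n j hj.1 hj.2)

end Cub

section QSec

set_option linter.unusedSectionVars false
set_option maxHeartbeats 1000000

variable {C : Type u} [Category.{v} C] [Abelian C] (X : CubConn C)

/-- `P_j = 𝟙 - ∂_j^0 ≫ Γ_j` on `X_{n+2}`. -/
noncomputable def Pmap (n j : ℕ) : X.X (n + 2) ⟶ X.X (n + 2) :=
  𝟙 _ - X.d (n + 1) j false ≫ X.conn n j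

/-- `Qp n k = P_1 ≫ ⋯ ≫ P_k` on `X_{n+2}`. -/
noncomputable def Qp (n : ℕ) : ℕ → (X.X (n + 2) ⟶ X.X (n + 2))
  | 0 => 𝟙 _
  | (k + 1) => Qp n k ≫ Pmap X n (k + 1)

lemma conn_Pmap_comm (n i j : ℕ) (hi : 1 ≤ i) (hij : i < j) (hj : j ≤ n + 2) :
    X.conn (n + 1) j ≫ Pmap X (n + 1) i = Pmap X n i ≫ X.conn (n + 1) j := by
  unfold Pmap
  rw [Preadditive.comp_sub, Preadditive.sub_comp, Category.comp_id, Category.id_comp]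
  congr 1
  rw [← Category.assoc, X.dconn_lt n i j false hi hij hj, Category.assoc,
    X.cc n i (j - 1) hi (by omega) (by omega), show j - 1 + 1 = j by omega, Category.assoc]

lemma conn_Pmap_zero (n j : ℕ) (hj1 : 1 ≤ j) (hj2 : j ≤ n + 1) :
    X.conn n j ≫ Pmap X n j = 0 := by
  unfold Pmap
  rw [Preadditive.comp_sub, Category.comp_id, ← Category.assoc,
    (X.dconn_eq_zero n j hj1 hj2).1, Category.id_comp, sub_self]

lemma conn_Qp_comm (n j : ℕ) (hj : j ≤ n + 2) :
    ∀ k, k < j → X.conn (n + 1) j ≫ Qp X (n + 1) k = Qp X n k ≫ X.conn (n + 1) j := by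
  intro k
  induction k with
  | zero => intro _; simp [Qp]
  | succ k ih =>
    intro hk
    rw [show Qp X (n + 1) (k + 1) = Qp X (n + 1) k ≫ Pmap X (n + 1) (k + 1) from rfl,
      show Qp X n (k + 1) = Qp X n k ≫ Pmap X n (k + 1) from rfl,
      ← Category.assoc, ih (by omega), Category.assoc,
      conn_Pmap_comm X n (k + 1) j (by omega) hk hj, ← Category.assoc]

lemma conn_Qp_self (n j : ℕ) (hj1 : 1 ≤ j) (hj2 : j ≤ n + 1) :
    X.conn n j ≫ Qp X n j = 0 := by
  obtain ⟨j', rfl⟩ : ∃ j', j = j' + 1 := ⟨j - 1, by omega⟩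
  rw [show Qp X n (j' + 1) = Qp X n j' ≫ Pmap X n (j' + 1) from rfl]
  cases j' with
  | zero => rw [show Qp X n 0 = 𝟙 _ from rfl, Category.id_comp, conn_Pmap_zero X n 1 le_rfl hj2]
  | succ j'' =>
    obtain ⟨m, rfl⟩ : ∃ m, n = m + 1 := ⟨n - 1, by omega⟩
    rw [← Category.assoc, conn_Qp_comm X m (j'' + 2) (by omega) (j'' + 1) (by omega),
      Category.assoc, conn_Pmap_zero X (m + 1) (j'' + 2) (by omega) hj2, comp_zero]

lemma conn_Qp_zero (n j : ℕ) (hj1 : 1 ≤ j) :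
    ∀ k, j ≤ k → k ≤ n + 1 → X.conn n j ≫ Qp X n k = 0 := by
  intro k
  induction k with
  | zero => intro h1 _; omega
  | succ k ih =>
    intro h1 h2
    rcases Nat.eq_or_lt_of_le h1 with heq | hlt
    · rw [← heq] at h2 ⊢
      exact conn_Qp_self X n j hj1 (by omega)
    · rw [show Qp X n (k + 1) = Qp X n k ≫ Pmap X n (k + 1) from rfl, ← Category.assoc,
        ih (by omega) (by omega), zero_comp]

lemma F_Qp_zero (n : ℕ) : (FSub X (n + 2)).arrow ≫ Qp X n (n + 1) = 0 := by
  apply arrow_comp_zero_of_le_ker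
  apply Finset.sup_le
  intro j hj
  simp only [Finset.mem_Icc] at hj
  apply imageSubobject_le_of_factors
  apply kernelSubobject_factors
  rw [Category.assoc, conn_Qp_zero X n j hj.1 (n + 1) hj.2 le_rfl, comp_zero]

lemma M_d_false (n i : ℕ) (hi1 : 1 ≤ i) (hi2 : i ≤ n + 1) :
    (MSub X.toPrecub (n + 2)).arrow ≫ X.d (n + 1) i false = 0 := by
  apply arrow_comp_zero_of_le_ker
  refine le_trans inf_le_right ?_
  exact Finset.inf_le (f := fun i => kernelSubobject (X.toPrecub.d (n + 1) i false))
    (by simp; omega)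

lemma M_Qp_fix (n : ℕ) : ∀ k, k ≤ n + 1 →
    (MSub X.toPrecub (n + 2)).arrow ≫ Qp X n k = (MSub X.toPrecub (n + 2)).arrow := by
  intro k
  induction k with
  | zero => intro _; simp [Qp]
  | succ k ih =>
    intro hk
    rw [show Qp X n (k + 1) = Qp X n k ≫ Pmap X n (k + 1) from rfl, ← Category.assoc,
      ih (by omega)]
    unfold Pmap
    rw [Preadditive.comp_sub, Category.comp_id, ← Category.assoc,
      M_d_false X n (k + 1) (by omega) hk, zero_comp, sub_zero]

end QSec

section QSec2

set_option linter.unusedSectionVars false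
set_option maxHeartbeats 1000000

variable {C : Type u} [Category.{v} C] [Abelian C] (X : CubConn C)

lemma N_Qp (n : ℕ) : ∀ k, k ≤ n + 1 →
    (NSub X.toPrecub (n + 2)).Factors ((NSub X.toPrecub (n + 2)).arrow ≫ Qp X n k) := by
  intro k
  induction k with
  | zero =>
    intro _
    rw [show Qp X n 0 = 𝟙 _ from rfl, Category.comp_id]
    exact Subobject.factors_self _
  | succ k ih =>
    intro hk
    have e1 : (NSub X.toPrecub (n + 2)).arrow ≫ Qp X n (k + 1) =
        (NSub X.toPrecub (n + 2)).arrow ≫ Qp X n k -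
        ((NSub X.toPrecub (n + 2)).arrow ≫ Qp X n k ≫ X.d (n + 1) (k + 1) false) ≫
          X.conn n (k + 1) := by
      rw [show Qp X n (k + 1) = Qp X n k ≫ Pmap X n (k + 1) from rfl]
      unfold Pmap
      simp only [Preadditive.comp_sub, Preadditive.sub_comp, Category.comp_id, Category.assoc]
    rw [e1]
    apply factors_sub _ _ (ih (by omega))
    have h1 : (NSub X.toPrecub (n + 1)).Factors
        ((NSub X.toPrecub (n + 2)).arrow ≫ Qp X n k ≫ X.d (n + 1) (k + 1) false) := by
      rw [← Category.assoc]
      exact factors_comp_trans _ _ (ih (by omega))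
        (N_face X (n + 1) (k + 1) (by omega) (by omega))
    exact factors_comp_trans _ _ h1 (N_conn X n (k + 1) (by omega) (by omega))

lemma Pmap_d_self (n i : ℕ) (hi1 : 1 ≤ i) (hi2 : i ≤ n + 1) :
    Pmap X n i ≫ X.d (n + 1) i false = 0 := by
  unfold Pmap
  rw [Preadditive.sub_comp, Category.id_comp, Category.assoc,
    (X.dconn_eq_zero n i hi1 hi2).1, Category.comp_id, sub_self]

lemma Pmap_d_comm (m i k : ℕ) (hi : 1 ≤ i) (hik : i < k) (hk : k ≤ m + 2) :
    Pmap X (m + 1) k ≫ X.d (m + 2) i false = X.d (m + 2) i false ≫ Pmap X m (k - 1) := by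
  unfold Pmap
  rw [Preadditive.sub_comp, Preadditive.comp_sub, Category.id_comp, Category.comp_id]
  congr 1
  rw [Category.assoc, X.dconn_lt m i k false hi hik hk, ← Category.assoc,
    X.toPrecub.dd (m + 1) i k false false hi hik (by omega), Category.assoc]

lemma N_Qp_d (n : ℕ) : ∀ k i, 1 ≤ i → i ≤ k → k ≤ n + 1 →
    (NSub X.toPrecub (n + 2)).arrow ≫ Qp X n k ≫ X.d (n + 1) i false = 0 := by
  intro k
  induction k with
  | zero => intro i h1 h2 _; omega
  | succ k ih =>
    intro i h1 h2 hk
    rw [show Qp X n (k + 1) = Qp X n k ≫ Pmap X n (k + 1) from rfl]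
    rcases Nat.eq_or_lt_of_le h2 with heq | hlt
    · subst heq
      rw [Category.assoc, Pmap_d_self X n (k + 1) h1 hk, comp_zero, comp_zero]
    · obtain ⟨m, rfl⟩ : ∃ m, n = m + 1 := ⟨n - 1, by omega⟩
      have hcomm := Pmap_d_comm X m i (k + 1) h1 (by omega) (by omega)
      simp only [Nat.add_sub_cancel] at hcomm
      have : (NSub X.toPrecub (m + 1 + 2)).arrow ≫ (Qp X (m + 1) k ≫ Pmap X (m + 1) (k + 1)) ≫
          X.d (m + 1 + 1) i false = ((NSub X.toPrecub (m + 1 + 2)).arrow ≫ Qp X (m + 1) k ≫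
            X.d (m + 1 + 1) i false) ≫ Pmap X m k := by
        simp only [Category.assoc]
        rw [hcomm]
      rw [this, ih i h1 (by omega) (by omega), zero_comp]

lemma N_Q_toM (n : ℕ) :
    (MSub X.toPrecub (n + 2)).Factors ((NSub X.toPrecub (n + 2)).arrow ≫ Qp X n (n + 1)) := by
  rw [show MSub X.toPrecub (n + 2) =
    ((Finset.Icc 1 (n + 2)).inf fun i => kernelSubobject (X.toPrecub.d (n + 1) i true)) ⊓
      ((Finset.Icc 1 (n + 1)).inf fun i => kernelSubobject (X.toPrecub.d (n + 1) i false))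
    from rfl, Subobject.inf_factors]
  constructor
  · exact N_Qp X n (n + 1) le_rfl
  · rw [Subobject.finset_inf_factors]
    intro i hi
    simp only [Finset.mem_Icc] at hi
    apply kernelSubobject_factors
    rw [Category.assoc, N_Qp_d X n (n + 1) i hi.1 hi.2 le_rfl]

lemma N_oneSubQ_toF (n : ℕ) : ∀ k, k ≤ n + 1 →
    (FSub X (n + 2)).Factors ((NSub X.toPrecub (n + 2)).arrow ≫ (𝟙 _ - Qp X n k)) := by
  intro k
  induction k with
  | zero =>
    intro _
    rw [show Qp X n 0 = 𝟙 _ from rfl, sub_self, comp_zero]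
    exact Subobject.factors_zero
  | succ k ih =>
    intro hk
    have e1 : (NSub X.toPrecub (n + 2)).arrow ≫ (𝟙 _ - Qp X n (k + 1)) =
        (NSub X.toPrecub (n + 2)).arrow ≫ (𝟙 _ - Qp X n k) +
        ((NSub X.toPrecub (n + 2)).arrow ≫ Qp X n k ≫ X.d (n + 1) (k + 1) false) ≫
          X.conn n (k + 1) := by
      rw [show Qp X n (k + 1) = Qp X n k ≫ Pmap X n (k + 1) from rfl]
      unfold Pmap
      simp only [Preadditive.comp_sub, Preadditive.sub_comp, Category.comp_id, Category.assoc]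
      abel
    rw [e1]
    apply Subobject.factors_add _ _ (ih (by omega))
    have h1 : (NSub X.toPrecub (n + 1)).Factors
        ((NSub X.toPrecub (n + 2)).arrow ≫ Qp X n k ≫ X.d (n + 1) (k + 1) false) := by
      rw [← Category.assoc]
      exact factors_comp_trans _ _ (N_Qp X n k (by omega))
        (N_face X (n + 1) (k + 1) (by omega) (by omega))
    refine Subobject.factors_of_le _ (Finset.le_sup (f := fun j =>
      imageSubobject ((NSub X.toPrecub (n + 1)).arrow ≫ X.conn n j)) (b := k + 1)
      (Finset.mem_Icc.mpr ⟨by omega, by omega⟩)) ?_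
    rw [← Subobject.factorThru_arrow _ _ h1, Category.assoc]
    exact factors_image _ _

end QSec2

section Diff

set_option linter.unusedSectionVars false
set_option maxHeartbeats 1000000

variable {C : Type u} [Category.{v} C] [Abelian C] (X : CubConn C)

lemma factors_image_self {A B : C} (g : A ⟶ B) : (imageSubobject g).Factors g := by
  have := factors_image g (𝟙 _)
  rwa [Category.id_comp] at this

lemma F_factors_conn (m j : ℕ) (hj1 : 1 ≤ j) (hj2 : j ≤ m + 1) :
    (FSub X (m + 2)).Factors ((NSub X.toPrecub (m + 1)).arrow ≫ X.conn m j) :=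
  Subobject.factors_of_le _ (Finset.le_sup (f := fun j' =>
    imageSubobject ((NSub X.toPrecub (m + 1)).arrow ≫ X.conn m j')) (b := j)
    (Finset.mem_Icc.mpr ⟨hj1, hj2⟩)) (factors_image_self _)

lemma conn_diff_factors (m j : ℕ) (hj1 : 1 ≤ j) (hj2 : j ≤ m + 1) :
    (FSub X (m + 1)).Factors (((NSub X.toPrecub (m + 1)).arrow ≫ X.conn m j) ≫
      ∑ i ∈ Finset.Icc 1 (m + 2), ((-1 : ℤ) ^ (i + 1)) • X.d (m + 1) i false) := by
  set t : ℕ → ((NSub X.toPrecub (m + 1) : C) ⟶ X.X (m + 1)) := fun i =>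
    ((-1 : ℤ) ^ (i + 1)) • (((NSub X.toPrecub (m + 1)).arrow ≫ X.conn m j) ≫
      X.d (m + 1) i false) with ht
  have hdist : ((NSub X.toPrecub (m + 1)).arrow ≫ X.conn m j) ≫
      (∑ i ∈ Finset.Icc 1 (m + 2), ((-1 : ℤ) ^ (i + 1)) • X.d (m + 1) i false) =
      ∑ i ∈ Finset.Icc 1 (m + 2), t i := by
    rw [Preadditive.comp_sum]
    exact Finset.sum_congr rfl fun i _ => by rw [Preadditive.comp_zsmul]
  rw [hdist]
  have hj_mem : j ∈ Finset.Icc 1 (m + 2) := Finset.mem_Icc.mpr ⟨hj1, by omega⟩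
  have hj1_mem : j + 1 ∈ (Finset.Icc 1 (m + 2)).erase j :=
    Finset.mem_erase.mpr ⟨by omega, Finset.mem_Icc.mpr ⟨by omega, by omega⟩⟩
  rw [← Finset.sum_erase_add _ t hj_mem, ← Finset.sum_erase_add _ t hj1_mem]
  have hpair : t (j + 1) + t j = 0 := by
    have e1 : t j = ((-1 : ℤ) ^ (j + 1)) • (NSub X.toPrecub (m + 1)).arrow := by
      rw [ht]
      simp only [Category.assoc]
      rw [(X.dconn_eq_zero m j hj1 hj2).1, Category.comp_id]
    have e2 : t (j + 1) = ((-1 : ℤ) ^ (j + 2)) • (NSub X.toPrecub (m + 1)).arrow := by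
      rw [ht]
      simp only [Category.assoc]
      rw [(X.dconn_eq_zero m j hj1 hj2).2, Category.comp_id]
    rw [e1, e2, ← add_smul, show ((-1 : ℤ) ^ (j + 2) + (-1 : ℤ) ^ (j + 1)) = 0 by
      rw [pow_succ]; ring, zero_smul]
  rw [add_assoc, hpair, add_zero]
  apply factors_finset_sum
  intro i hi
  rw [Finset.mem_erase, Finset.mem_erase, Finset.mem_Icc] at hi
  obtain ⟨hne1, hne2, hi1, hi2⟩ := hi
  apply factors_zsmul
  rcases lt_or_ge i j with hlt | hle
  · -- i < j : so j ≥ 2, m ≥ 1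
    obtain ⟨p, rfl⟩ : ∃ p, m = p + 1 := ⟨m - 1, by omega⟩
    rw [Category.assoc, X.dconn_lt p i j false hi1 hlt (by omega), ← Category.assoc]
    exact factors_comp_trans _ _ (N_face X (p + 1) i hi1 (by omega))
      (F_factors_conn X p (j - 1) (by omega) (by omega))
  · -- i > j + 1 : so m ≥ 1
    have hgt : j + 1 < i := by omega
    obtain ⟨p, rfl⟩ : ∃ p, m = p + 1 := ⟨m - 1, by omega⟩
    rw [Category.assoc, X.dconn_gt p i j false hj1 hgt (by omega), ← Category.assoc]
    exact factors_comp_trans _ _ (N_face X (p + 1) (i - 1) (by omega) (by omega))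
      (F_factors_conn X p j hj1 (by omega))

lemma F_diff (n : ℕ) : (FSub X n).Factors ((FSub X (n + 1)).arrow ≫
    ∑ i ∈ Finset.Icc 1 (n + 1), ((-1 : ℤ) ^ (i + 1)) • X.d n i false) := by
  cases n with
  | zero =>
    rw [show FSub X 1 = ⊥ from rfl, Subobject.bot_arrow, zero_comp]
    exact Subobject.factors_zero
  | succ m =>
    rw [factors_iff_coker]
    have hF : FSub X (m + 2) ≤ kernelSubobject
        ((∑ i ∈ Finset.Icc 1 (m + 2), ((-1 : ℤ) ^ (i + 1)) • X.d (m + 1) i false) ≫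
          cokernel.π (FSub X (m + 1)).arrow) := by
      apply Finset.sup_le
      intro j hj
      simp only [Finset.mem_Icc] at hj
      apply imageSubobject_le_of_factors
      apply kernelSubobject_factors
      have := (factors_iff_coker _ _).mp (conn_diff_factors X m j hj.1 hj.2)
      simp only [Category.assoc] at this ⊢
      exact this
    have := arrow_comp_zero_of_le_ker hF
    rw [← Category.assoc] at this
    exact this

end Diff

section Main

set_option linter.unusedSectionVars false
set_option maxHeartbeats 1000000

variable {C : Type u} [Category.{v} C] [Abelian C] (X : CubConn C)

lemma M_le_N : ∀ n, MSub X.toPrecub n ≤ NSub X.toPrecub n := by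
  intro n
  cases n with
  | zero => exact le_rfl
  | succ m => exact inf_le_left

lemma M_eq_N_one : MSub X.toPrecub 1 = NSub X.toPrecub 1 := by
  show ((Finset.Icc 1 1).inf fun i => kernelSubobject (X.d 0 i true)) ⊓
      ((Finset.Icc 1 0).inf fun i => kernelSubobject (X.d 0 i false)) = _
  rw [show Finset.Icc 1 0 = (∅ : Finset ℕ) from Finset.Icc_eq_empty (by omega),
    Finset.inf_empty, inf_top_eq]
  rfl

lemma MF_inf (n : ℕ) : MSub X.toPrecub (n + 2) ⊓ FSub X (n + 2) = ⊥ := by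
  set M := MSub X.toPrecub (n + 2)
  set F := FSub X (n + 2)
  have harr : (M ⊓ F).arrow = 0 := by
    have h1 : (M ⊓ F).arrow ≫ Qp X n (n + 1) = (M ⊓ F).arrow := by
      rw [← Subobject.factorThru_arrow _ _ (Subobject.inf_arrow_factors_left M F),
        Category.assoc, M_Qp_fix X n (n + 1) le_rfl]
    have h2 : (M ⊓ F).arrow ≫ Qp X n (n + 1) = 0 := by
      rw [← Subobject.factorThru_arrow _ _ (Subobject.inf_arrow_factors_right M F),
        Category.assoc, F_Qp_zero X n, comp_zero]
    rw [← h1, h2]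
  refine le_antisymm (le_of_factors_arrow ?_) bot_le
  rw [harr]
  exact Subobject.factors_zero

lemma MF_sup (n : ℕ) : MSub X.toPrecub (n + 2) ⊔ FSub X (n + 2) = NSub X.toPrecub (n + 2) := by
  refine le_antisymm (sup_le (M_le_N X (n + 2)) (F_le_N X (n + 2))) (le_of_factors_arrow ?_)
  have hdec : (NSub X.toPrecub (n + 2)).arrow =
      (NSub X.toPrecub (n + 2)).arrow ≫ Qp X n (n + 1) +
      (NSub X.toPrecub (n + 2)).arrow ≫ (𝟙 _ - Qp X n (n + 1)) := by
    rw [Preadditive.comp_sub, Category.comp_id]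
    abel
  rw [hdec]
  exact Subobject.factors_add _ _
    (Subobject.factors_of_le _ le_sup_left (N_Q_toM X n))
    (Subobject.factors_of_le _ le_sup_right (N_oneSubQ_toF X n (n + 1) le_rfl))

lemma coker_bot {Y : C} (F N' : Subobject Y) (hF : F.arrow = 0) (h : F ≤ N') :
    Nonempty ((N' : C) ≅ cokernel (Subobject.ofLE F N' h)) := by
  have h0 : Subobject.ofLE F N' h = 0 := by
    rw [← cancel_mono N'.arrow, Subobject.ofLE_arrow, hF, zero_comp]
  exact ⟨cokernelZeroIsoTarget.symm ≪≫ (cokernelIsoOfEq h0).symm⟩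

lemma main_iso (n : ℕ) (h : FSub X (n + 2) ≤ NSub X.toPrecub (n + 2)) :
    Nonempty (((MSub X.toPrecub (n + 2) : C)) ≅ cokernel (Subobject.ofLE _ _ h)) := by
  set M := MSub X.toPrecub (n + 2)
  set F := FSub X (n + 2)
  set N := NSub X.toPrecub (n + 2)
  set Q := Qp X n (n + 1) with hQ
  set κ := Subobject.ofLE F N h with hκ
  have hQM : M.Factors (N.arrow ≫ Q) := N_Q_toM X n
  set mm := M.factorThru (N.arrow ≫ Q) hQM with hmm
  have hm : mm ≫ M.arrow = N.arrow ≫ Q := Subobject.factorThru_arrow _ _ _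
  have hκm : κ ≫ mm = 0 := by
    rw [← cancel_mono M.arrow, Category.assoc, hm, zero_comp, ← Category.assoc,
      Subobject.ofLE_arrow, F_Qp_zero X n]
  set q := cokernel.desc κ mm hκm with hq
  set ι := Subobject.ofLE M N (M_le_N X (n + 2)) with hι
  set φ := ι ≫ cokernel.π κ with hφ
  have hom_inv : φ ≫ q = 𝟙 _ := by
    rw [hφ, Category.assoc, cokernel.π_desc, ← cancel_mono M.arrow, Category.assoc, hm,
      ← Category.assoc, Subobject.ofLE_arrow, Category.id_comp, M_Qp_fix X n (n + 1) le_rfl]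
  have inv_hom : q ≫ φ = 𝟙 _ := by
    rw [← cancel_epi (cokernel.π κ), ← Category.assoc, cokernel.π_desc, Category.comp_id]
    have hFfac : F.Factors (N.arrow ≫ (𝟙 _ - Q)) := N_oneSubQ_toF X n (n + 1) le_rfl
    set t := F.factorThru _ hFfac with htdef
    have htκ : t ≫ κ = 𝟙 _ - mm ≫ ι := by
      rw [← cancel_mono N.arrow, Category.assoc, Subobject.ofLE_arrow,
        Subobject.factorThru_arrow, Preadditive.sub_comp, Category.id_comp, Category.assoc,
        Subobject.ofLE_arrow, hm, Preadditive.comp_sub, Category.comp_id]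
    have hzero : (𝟙 _ - mm ≫ ι) ≫ cokernel.π κ = 0 := by
      rw [← htκ, Category.assoc, cokernel.condition, comp_zero]
    rw [Preadditive.sub_comp, Category.id_comp, sub_eq_zero] at hzero
    rw [hφ, ← Category.assoc, ← hzero]
  exact ⟨⟨φ, q, hom_inv, inv_hom⟩⟩

end Main

theorem stmt2 {C : Type u} [Category.{v} C] [Abelian C] (X : CubConn C) :
    (∀ n, FSub X n ≤ NSub X.toPrecub n) ∧
    (∀ n, (FSub X n).Factors ((FSub X (n + 1)).arrow ≫
        ∑ i ∈ Finset.Icc 1 (n + 1), ((-1 : ℤ) ^ (i + 1)) • X.d n i false)) ∧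
    (∀ n, MSub X.toPrecub n ⊓ FSub X n = ⊥ ∧ MSub X.toPrecub n ⊔ FSub X n = NSub X.toPrecub n) ∧
    (∀ n (h : FSub X n ≤ NSub X.toPrecub n),
      Nonempty (((MSub X.toPrecub n : C)) ≅ cokernel (Subobject.ofLE _ _ h))) := by
  refine ⟨F_le_N X, F_diff X, ?_, ?_⟩
  · intro n
    match n with
    | 0 =>
      constructor
      · rw [show FSub X 0 = ⊥ from rfl]; exact inf_bot_eq _
      · rw [show FSub X 0 = ⊥ from rfl, sup_bot_eq]; rfl
    | 1 =>
      constructor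
      · rw [show FSub X 1 = ⊥ from rfl]; exact inf_bot_eq _
      · rw [show FSub X 1 = ⊥ from rfl, sup_bot_eq]; exact M_eq_N_one X
    | (n + 2) => exact ⟨MF_inf X n, MF_sup X n⟩
  · intro n h
    match n, h with
    | 0, h =>
      obtain ⟨e⟩ := coker_bot (FSub X 0) (NSub X.toPrecub 0)
        (by rw [show FSub X 0 = ⊥ from rfl, Subobject.bot_arrow]) h
      exact ⟨Subobject.isoOfEq _ _ (show MSub X.toPrecub 0 = NSub X.toPrecub 0 from rfl) ≪≫ e⟩
    | 1, h =>
      obtain ⟨e⟩ := coker_bot (FSub X 1) (NSub X.toPrecub 1)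
        (by rw [show FSub X 1 = ⊥ from rfl, Subobject.bot_arrow]) h
      exact ⟨Subobject.isoOfEq _ _ (M_eq_N_one X) ≪≫ e⟩
    | (n + 2), h => exact main_iso X n h
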